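/- arXiv:1508.00772 — 2 statements merged into one kernel-verified Lean document; each statement's English description precedes it below -/
import Mathlib

section
/- (Telescoping sum for partitions) Let μ be a fixed partition and g a rational-valued function of partitions. Define A(n) := Σ_{|λ/μ|=n} f_{λ/μ} · g(λ) and B(n) := Σ_{|λ/μ|=n} f_{λ/μ} · Dg(λ), where the sums range over all partitions λ containing μ with |λ| − |μ| = n. Then for every nonnegative integer n, A(n) = A(0) + Σ_{k=0}^{n−1} B(k). -/
open scoped Classical

namespace HookDiff

/-- The hook length of the box `c` in the Young diagram `μ`: the number of boxes
directly to its right, directly below/above it in its column, plus the box itself. -/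
def hook (μ : YoungDiagram) (c : ℕ × ℕ) : ℕ :=
  (μ.cells.filter (fun d => (d.1 = c.1 ∧ c.2 ≤ d.2) ∨ (d.2 = c.2 ∧ c.1 ≤ d.1))).card

/-- `H μ` is the product of all hook lengths of `μ`. -/
def H (μ : YoungDiagram) : ℚ := ∏ c ∈ μ.cells, (hook μ c : ℚ)

/-- The cells that can be added to `μ` to produce a Young diagram (inner corners). -/
noncomputable def addables (μ : YoungDiagram) : Finset (ℕ × ℕ) :=
  (Finset.range (μ.card + 1) ×ˢ Finset.range (μ.card + 1)).filter
    (fun c => c ∉ μ ∧ IsLowerSet (↑(insert c μ.cells) : Set (ℕ × ℕ)))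

/-- Add a box at cell `c` to `μ` (junk value `μ` if the result is not a diagram). -/
noncomputable def addBox (μ : YoungDiagram) (c : ℕ × ℕ) : YoungDiagram :=
  if h : IsLowerSet (↑(insert c μ.cells) : Set (ℕ × ℕ)) then ⟨insert c μ.cells, h⟩ else μ

/-- The cells that can be removed from `μ` leaving a Young diagram (outer corners). -/
noncomputable def removables (μ : YoungDiagram) : Finset (ℕ × ℕ) :=
  μ.cells.filter (fun c => IsLowerSet (↑(μ.cells.erase c) : Set (ℕ × ℕ)))

/-- Remove the box at cell `c` from `μ` (junk value `μ` if the result is not a diagram). -/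
noncomputable def removeBox (μ : YoungDiagram) (c : ℕ × ℕ) : YoungDiagram :=
  if h : IsLowerSet (↑(μ.cells.erase c) : Set (ℕ × ℕ)) then ⟨μ.cells.erase c, h⟩ else μ

/-- The difference operator `D`: `Dg(λ) = Σ_{λ⁺} g(λ⁺) − g(λ)`, where `λ⁺` runs over
all partitions obtained from `λ` by adding one box. -/
noncomputable def D (g : YoungDiagram → ℚ) : YoungDiagram → ℚ :=
  fun μ => (∑ c ∈ addables μ, g (addBox μ c)) - g μ

/-- The difference operator `D⁻`: `D⁻g(λ) = |λ|·g(λ) − Σ_{λ⁻} g(λ⁻)`, where `λ⁻` runs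
over all partitions obtained from `λ` by removing one box. -/
noncomputable def Dminus (g : YoungDiagram → ℚ) : YoungDiagram → ℚ :=
  fun μ => (μ.card : ℚ) * g μ - ∑ c ∈ removables μ, g (removeBox μ c)

/-- `fskew n μ λ` is the number of standard Young tableaux of skew shape `λ/μ`
(with `n = |λ| - |μ|`), i.e. the number of chains `μ = ν₀ ⊂ ν₁ ⊂ ⋯ ⊂ ν_n = λ`
in which each diagram is obtained from the previous one by adding a single box. -/
noncomputable def fskew : ℕ → YoungDiagram → YoungDiagram → ℕ
  | 0, μ, l => if μ = l then 1 else 0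
  | n + 1, μ, l => ∑ c ∈ addables μ, fskew n (addBox μ c) l

/-- `f_λ`, the number of standard Young tableaux of shape `λ`. -/
noncomputable def f (l : YoungDiagram) : ℕ := fskew l.card ⊥ l

/-- `S(λ, r) = Σ_{□∈λ} ∏_{j=1}^{r} (h_□² − j²)`. -/
def S (l : YoungDiagram) (r : ℕ) : ℚ :=
  ∑ c ∈ l.cells, ∏ j ∈ Finset.Icc 1 r, ((hook l c : ℚ) ^ 2 - (j : ℚ) ^ 2)

/-- `K_r = (2r)!·(2r+1)! / (r!·(r+1)!²)`. -/
def K (r : ℕ) : ℚ :=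
  ((2 * r).factorial : ℚ) * ((2 * r + 1).factorial : ℚ) /
    ((r.factorial : ℚ) * ((r + 1).factorial : ℚ) ^ 2)

/-- The content of the box `c = (i, j)` is `j - i`. -/
def content (c : ℕ × ℕ) : ℚ := (c.2 : ℚ) - (c.1 : ℚ)

/-- `C(λ, r) = Σ_{□∈λ} ∏_{j=0}^{r-1} (c_□² − j²)`. -/
def Ccont (l : YoungDiagram) (r : ℕ) : ℚ :=
  ∑ c ∈ l.cells, ∏ j ∈ Finset.range r, (content c ^ 2 - (j : ℚ) ^ 2)

/-!
Read `fskew n μ λ` as the number of chains `μ = ν₀ ⋖ ν₁ ⋖ ⋯ ⋖ ν_n = λ` of single-box additions,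
and let `A_n(g) = Σ_λ fskew n μ λ • g λ`. Splitting a chain of length `n + 1` at its first box
gives the recursion defining `fskew`; splitting it at its last box instead gives
`A_{n+1}(g) = A_n(Σ_{λ⁺} g(λ⁺)) = A_n(g) + A_n(Dg)`, and the theorem is the telescoped form.
-/

section AddBox

variable {μ : YoungDiagram} {c : ℕ × ℕ}

lemma cells_addBox (hc : c ∈ addables μ) : (addBox μ c).cells = insert c μ.cells := by
  rw [addBox, dif_pos (Finset.mem_filter.mp hc).2.2]

lemma le_addBox (hc : c ∈ addables μ) : μ ≤ addBox μ c := by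
  rw [← YoungDiagram.cells_subset_iff, cells_addBox hc]
  exact Finset.subset_insert _ _

lemma card_addBox (hc : c ∈ addables μ) : (addBox μ c).card = μ.card + 1 := by
  rw [YoungDiagram.card, cells_addBox hc,
    Finset.card_insert_of_notMem (Finset.mem_filter.mp hc).2.1]

end AddBox

lemma support_fskew_subset (n : ℕ) (μ : YoungDiagram) :
    Function.support (fskew n μ) ⊆ {l | μ ≤ l ∧ l.card = μ.card + n} := by
  induction n generalizing μ with
  | zero =>
    intro l hl
    obtain rfl : μ = l := by by_contra h; simp [fskew, h] at hl
    exact ⟨le_rfl, rfl⟩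
  | succ n ih =>
    intro l hl
    obtain ⟨c, hc, hl⟩ := Finset.exists_ne_zero_of_sum_ne_zero hl
    obtain ⟨hle, hcard⟩ := ih _ hl
    exact ⟨(le_addBox hc).trans hle, by rw [hcard, card_addBox hc]; omega⟩

lemma hasFiniteSupport_fskew (n : ℕ) (μ : YoungDiagram) : (fskew n μ).HasFiniteSupport := by
  induction n generalizing μ with
  | zero =>
    exact (Set.finite_singleton μ).subset fun l hl => by by_contra h; simp_all [fskew, eq_comm]
  | succ n ih => exact Function.HasFiniteSupport.sum (fun c => ih (addBox μ c)) (addables μ)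

noncomputable def upSum {M : Type*} [AddCommMonoid M] (g : YoungDiagram → M) :
    YoungDiagram → M :=
  fun l => ∑ c ∈ addables l, g (addBox l c)

lemma D_eq_upSum_sub (g : YoungDiagram → ℚ) : D g = upSum g - g := rfl

section SkewSum

variable {M : Type*} [AddCommMonoid M]

noncomputable def skewSum (n : ℕ) (μ : YoungDiagram) (g : YoungDiagram → M) : M :=
  ∑ᶠ l, fskew n μ l • g l

lemma hasFiniteSupport_fskew_smul (n : ℕ) (μ : YoungDiagram) (g : YoungDiagram → M) :
    (fun l => fskew n μ l • g l).HasFiniteSupport :=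
  (hasFiniteSupport_fskew n μ).subset (Function.support_smul_subset_left (fskew n μ) g)

lemma finsum_mem_level_eq_skewSum (n : ℕ) (μ : YoungDiagram) (g : YoungDiagram → M) :
    ∑ᶠ l ∈ {l : YoungDiagram | μ ≤ l ∧ l.card = μ.card + n}, fskew n μ l • g l =
      skewSum n μ g := by
  rw [skewSum, ← finsum_mem_univ (fun l => fskew n μ l • g l)]
  refine finsum_mem_inter_support_eq' _ _ _ fun l hl => ?_
  simpa using support_fskew_subset n μ (Function.support_smul_subset_left _ _ hl)

lemma skewSum_zero (μ : YoungDiagram) (g : YoungDiagram → M) : skewSum 0 μ g = g μ := by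
  rw [skewSum, finsum_eq_single _ μ fun l hl => by simp [fskew, Ne.symm hl]]
  simp [fskew]

lemma skewSum_succ (n : ℕ) (μ : YoungDiagram) (g : YoungDiagram → M) :
    skewSum (n + 1) μ g = ∑ c ∈ addables μ, skewSum n (addBox μ c) g := by
  simp only [skewSum, fskew, Finset.sum_smul]
  exact finsum_sum_comm _ _ fun c _ => hasFiniteSupport_fskew_smul n _ g

lemma skewSum_succ_eq_skewSum_upSum (n : ℕ) (μ : YoungDiagram) (g : YoungDiagram → M) :
    skewSum (n + 1) μ g = skewSum n μ (upSum g) := by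
  induction n generalizing μ with
  | zero => simp only [skewSum_succ, skewSum_zero, upSum]
  | succ n ih =>
    rw [skewSum_succ, skewSum_succ]
    exact Finset.sum_congr rfl fun c _ => ih _

lemma skewSum_sub {G : Type*} [AddCommGroup G] (n : ℕ) (μ : YoungDiagram)
    (g h : YoungDiagram → G) : skewSum n μ (g - h) = skewSum n μ g - skewSum n μ h := by
  simp only [skewSum, Pi.sub_apply, smul_sub]
  exact finsum_sub_distrib (hasFiniteSupport_fskew_smul n μ g) (hasFiniteSupport_fskew_smul n μ h)

end SkewSum

lemma skewSum_succ_sub_skewSum (n : ℕ) (μ : YoungDiagram) (g : YoungDiagram → ℚ) :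
    skewSum (n + 1) μ g - skewSum n μ g = skewSum n μ (D g) := by
  rw [skewSum_succ_eq_skewSum_upSum, D_eq_upSum_sub, skewSum_sub]

/-- **Telescoping sum for partitions.** With `A(n) = Σ_{|λ/μ|=n} f_{λ/μ} g(λ)` and
`B(n) = Σ_{|λ/μ|=n} f_{λ/μ} Dg(λ)`, we have `A(n) = A(0) + Σ_{k=0}^{n−1} B(k)`. -/
theorem telescoping_sum (μ : YoungDiagram) (g : YoungDiagram → ℚ) (n : ℕ) :
    (∑ᶠ l ∈ {l : YoungDiagram | μ ≤ l ∧ l.card = μ.card + n}, (fskew n μ l : ℚ) * g l)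
      = (∑ᶠ l ∈ {l : YoungDiagram | μ ≤ l ∧ l.card = μ.card + 0}, (fskew 0 μ l : ℚ) * g l)
        + ∑ k ∈ Finset.range n,
            ∑ᶠ l ∈ {l : YoungDiagram | μ ≤ l ∧ l.card = μ.card + k},
              (fskew k μ l : ℚ) * D g l := by
  simp only [← nsmul_eq_mul, finsum_mem_level_eq_skewSum]
  rw [Finset.eq_sum_range_sub (fun k => skewSum k μ g) n]
  simp only [skewSum_succ_sub_skewSum]

end HookDiff
end

section
/- For a partition λ with n = |λ|, define the polynomial φ_λ(z) := ∏_{i=1}^{n} (z + n + λ_i − i), where λ_i = 0 for i greater than the number of parts of λ. Then, as an identity of polynomials in the variable z, D( φ_λ(z)/H_λ ) = z · φ_λ(z+1)/H_λ; that is, Σ_{λ⁺} φ_{λ⁺}(z)/H_{λ⁺} − φ_λ(z)/H_λ = z·φ_λ(z+1)/H_λ, where λ⁺ ranges over all partitions obtained from λ by adding one box (and φ_{λ⁺} is formed with n replaced by n+1). -/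
open scoped Classical

namespace HookDiff

/-- `φ_λ(z) = ∏_{i=1}^{n} (z + n + λ_i − i)` with `n = |λ|`, evaluated at `z : ℚ`
(here `λ_i = rowLen (i-1)`, and `λ_i = 0` beyond the last part). -/
def phiEval (μ : YoungDiagram) (z : ℚ) : ℚ :=
  ∏ i ∈ Finset.range μ.card, (z + (μ.card : ℚ) + (μ.rowLen i : ℚ) - (i : ℚ) - 1)

/-!
Write `n = |λ|` and `β_i = λ_i + n - i` for `0 ≤ i ≤ n`, a strictly decreasing sequence with
`β_n = 0`. Adding a box to row `k` raises `β_k` by one and the others stay put, so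
`φ_{λ⁺}(z) = (z + β_k + 1) ∏_{j ≠ k} (z + β_j)`, while `φ_λ(z) = ∏_{i < n} (z - 1 + β_i)` and
`z φ_λ(z + 1) = ∏_{j ≤ n} (z + β_j)`. By the classical hook computation, `H_λ / H_{λ⁺}` is the
Lagrange weight `φ_λ(-β_k) / ∏_{j ≠ k} (β_j - β_k)` of `φ_λ` at the node `-β_k` among
`-β_0, …, -β_n`; this weight vanishes at the rows that cannot be extended. Lagrange interpolation
of the monic degree-`n` polynomial `φ_λ` at these `n + 1` nodes (the weights sum to its leading
coefficient `1`) then gives `Σ_{λ⁺} φ_{λ⁺}(z) / H_{λ⁺} = (φ_λ(z) + z φ_λ(z + 1)) / H_λ`.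
-/

open Finset Polynomial

theorem _root_.YoungDiagram.rowLen_le_card (μ : YoungDiagram) (i : ℕ) : μ.rowLen i ≤ μ.card := by
  rw [μ.rowLen_eq_card]
  exact card_le_card fun c hc => (μ.mem_cells c).2 (YoungDiagram.mem_row_iff.1 hc).1

theorem _root_.YoungDiagram.colLen_le_card (μ : YoungDiagram) (j : ℕ) : μ.colLen j ≤ μ.card := by
  rw [μ.colLen_eq_card]
  exact card_le_card fun c hc => (μ.mem_cells c).2 (YoungDiagram.mem_col_iff.1 hc).1

theorem _root_.YoungDiagram.rowLen_card_eq_zero (μ : YoungDiagram) : μ.rowLen μ.card = 0 := by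
  by_contra h
  have := YoungDiagram.mem_iff_lt_colLen.1 (YoungDiagram.mem_iff_lt_rowLen.2 (Nat.pos_of_ne_zero h))
  exact absurd (μ.colLen_le_card 0) (by omega)

theorem _root_.YoungDiagram.mk_rowLen_notMem (μ : YoungDiagram) (i : ℕ) : (i, μ.rowLen i) ∉ μ :=
  fun h => lt_irrefl _ (YoungDiagram.mem_iff_lt_rowLen.1 h)

theorem _root_.YoungDiagram.rowLen_eq_of_mem_iff {μ : YoungDiagram} {i r : ℕ}
    (h : ∀ j, (i, j) ∈ μ ↔ j < r) : μ.rowLen i = r :=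
  eq_of_forall_lt_iff fun j => by rw [← YoungDiagram.mem_iff_lt_rowLen, h]

theorem _root_.YoungDiagram.colLen_eq_of_mem_iff {μ : YoungDiagram} {j r : ℕ}
    (h : ∀ i, (i, j) ∈ μ ↔ i < r) : μ.colLen j = r :=
  eq_of_forall_lt_iff fun i => by rw [← YoungDiagram.mem_iff_lt_colLen, h]

theorem hook_add_one {μ : YoungDiagram} {i j : ℕ} (h : (i, j) ∈ μ) :
    hook μ (i, j) + 1 = (μ.rowLen i - j) + (μ.colLen j - i) := by
  have hi := YoungDiagram.mem_iff_lt_rowLen.1 h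
  have hj := YoungDiagram.mem_iff_lt_colLen.1 h
  have hcells : μ.cells.filter (fun d => (d.1 = i ∧ j ≤ d.2) ∨ (d.2 = j ∧ i ≤ d.1))
      = {i} ×ˢ Ico j (μ.rowLen i) ∪ Ico (i + 1) (μ.colLen j) ×ˢ {j} := by
    ext ⟨a, b⟩
    simp only [mem_filter, YoungDiagram.mem_cells, mem_union, mem_product, mem_singleton,
      mem_Ico]
    constructor
    · rintro ⟨hab, (⟨rfl, hb⟩ | ⟨rfl, ha⟩)⟩
      · exact .inl ⟨rfl, hb, YoungDiagram.mem_iff_lt_rowLen.1 hab⟩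
      · rcases ha.lt_or_eq with ha | rfl
        · exact .inr ⟨⟨ha, YoungDiagram.mem_iff_lt_colLen.1 hab⟩, rfl⟩
        · exact .inl ⟨rfl, le_rfl, hi⟩
    · rintro (⟨rfl, hb, hb'⟩ | ⟨⟨ha, ha'⟩, rfl⟩)
      · exact ⟨YoungDiagram.mem_iff_lt_rowLen.2 hb', .inl ⟨rfl, hb⟩⟩
      · exact ⟨YoungDiagram.mem_iff_lt_colLen.2 ha', .inr ⟨rfl, by omega⟩⟩
  have hdisj : Disjoint ({i} ×ˢ Ico j (μ.rowLen i)) (Ico (i + 1) (μ.colLen j) ×ˢ {j}) := by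
    simp only [disjoint_left, mem_product, mem_singleton, mem_Ico]
    omega
  rw [hook, hcells, card_union_of_disjoint hdisj, card_product, card_product, Nat.card_Ico,
    Nat.card_Ico, card_singleton, card_singleton]
  omega

theorem hook_pos {μ : YoungDiagram} {c : ℕ × ℕ} (h : c ∈ μ) : 0 < hook μ c :=
  card_pos.2 ⟨c, by simp [h]⟩

theorem H_ne_zero (μ : YoungDiagram) : H μ ≠ 0 :=
  prod_ne_zero_iff.2 fun _ hc => Nat.cast_ne_zero.2 (hook_pos ((μ.mem_cells _).1 hc)).ne'

def IsAddableRow (μ : YoungDiagram) (k : ℕ) : Prop := k = 0 ∨ μ.rowLen k < μ.rowLen (k - 1)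

noncomputable def addToRow (μ : YoungDiagram) (k : ℕ) : YoungDiagram := addBox μ (k, μ.rowLen k)

section AddToRow

variable {μ : YoungDiagram} {k : ℕ}

theorem IsAddableRow.le_card (hk : IsAddableRow μ k) : k ≤ μ.card := by
  rcases hk with rfl | hk
  · exact Nat.zero_le _
  · have := YoungDiagram.mem_iff_lt_colLen.1
      (YoungDiagram.mem_iff_lt_rowLen.2 (by omega : 0 < μ.rowLen (k - 1)))
    have := μ.colLen_le_card 0
    omega

theorem IsAddableRow.rowLen_lt (hk : IsAddableRow μ k) {i : ℕ} (hi : i < k) :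
    μ.rowLen k < μ.rowLen i := by
  rcases hk with rfl | hk
  · exact absurd hi (Nat.not_lt_zero _)
  · exact hk.trans_le (μ.rowLen_anti _ _ (by omega))

theorem IsAddableRow.colLen_rowLen (hk : IsAddableRow μ k) : μ.colLen (μ.rowLen k) = k :=
  YoungDiagram.colLen_eq_of_mem_iff fun i => by
    rw [YoungDiagram.mem_iff_lt_rowLen]
    refine ⟨fun h => ?_, hk.rowLen_lt⟩
    by_contra hki
    exact absurd (μ.rowLen_anti _ _ (not_lt.1 hki)) (not_le.2 h)

theorem IsAddableRow.isLowerSet_insert (hk : IsAddableRow μ k) :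
    IsLowerSet (↑(insert (k, μ.rowLen k) μ.cells) : Set (ℕ × ℕ)) := by
  rintro ⟨a, b⟩ ⟨i, j⟩ ⟨hia, hjb⟩ hab
  dsimp only at hia hjb
  simp only [coe_insert, Set.mem_insert_iff, mem_coe, YoungDiagram.mem_cells,
    Prod.mk.injEq] at hab ⊢
  rcases hab with ⟨rfl, rfl⟩ | hab
  · rcases hjb.lt_or_eq with hj | rfl
    · exact .inr (μ.up_left_mem hia le_rfl (YoungDiagram.mem_iff_lt_rowLen.2 hj))
    · rcases hia.lt_or_eq with hi | rfl
      · exact .inr (YoungDiagram.mem_iff_lt_rowLen.2 (hk.rowLen_lt hi))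
      · exact .inl ⟨rfl, rfl⟩
  · exact .inr (μ.up_left_mem hia hjb hab)

theorem mem_addToRow (hk : IsAddableRow μ k) {x : ℕ × ℕ} :
    x ∈ addToRow μ k ↔ x = (k, μ.rowLen k) ∨ x ∈ μ := by
  rw [addToRow, addBox, dif_pos hk.isLowerSet_insert, YoungDiagram.mem_mk, mem_insert,
    YoungDiagram.mem_cells]

theorem cells_addToRow (hk : IsAddableRow μ k) :
    (addToRow μ k).cells = insert (k, μ.rowLen k) μ.cells := by
  rw [addToRow, addBox, dif_pos hk.isLowerSet_insert]

theorem card_addToRow (hk : IsAddableRow μ k) : (addToRow μ k).card = μ.card + 1 :=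
  (congrArg card (cells_addToRow hk)).trans
    (card_insert_of_notMem (by rw [YoungDiagram.mem_cells]; exact μ.mk_rowLen_notMem k))

theorem rowLen_addToRow (hk : IsAddableRow μ k) (i : ℕ) :
    (addToRow μ k).rowLen i = if i = k then μ.rowLen k + 1 else μ.rowLen i :=
  YoungDiagram.rowLen_eq_of_mem_iff fun j => by
    rw [mem_addToRow hk, YoungDiagram.mem_iff_lt_rowLen, Prod.mk.injEq]
    split_ifs with h <;> subst_vars <;> omega

theorem colLen_addToRow (hk : IsAddableRow μ k) (j : ℕ) :
    (addToRow μ k).colLen j = if j = μ.rowLen k then μ.colLen j + 1 else μ.colLen j :=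
  YoungDiagram.colLen_eq_of_mem_iff fun i => by
    rw [mem_addToRow hk, YoungDiagram.mem_iff_lt_colLen, Prod.mk.injEq]
    have := hk.colLen_rowLen
    split_ifs with h <;> subst_vars <;> omega

theorem mem_addables_iff {c : ℕ × ℕ} :
    c ∈ addables μ ↔ c.2 = μ.rowLen c.1 ∧ IsAddableRow μ c.1 := by
  obtain ⟨i, j⟩ := c
  simp only [addables, mem_filter, mem_product, mem_range]
  constructor
  · rintro ⟨-, hij, hls⟩
    have hmem : ∀ x ≤ (i, j), x ≠ (i, j) → x ∈ μ := fun x hx hne => by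
      simpa [hne] using hls hx (mem_insert_self _ _)
    have hle : μ.rowLen i ≤ j := not_lt.1 (hij ∘ YoungDiagram.mem_iff_lt_rowLen.2)
    have hge : j ≤ μ.rowLen i := by
      by_contra! hlt
      exact μ.mk_rowLen_notMem i (hmem _ ⟨le_rfl, hlt.le⟩ (by simp; omega))
    obtain rfl : j = μ.rowLen i := le_antisymm hge hle
    refine ⟨rfl, or_iff_not_imp_left.2 fun hi => YoungDiagram.mem_iff_lt_rowLen.1 ?_⟩
    exact hmem (i - 1, μ.rowLen i) ⟨Nat.sub_le i 1, le_rfl⟩ (by simp; omega)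
  · rintro ⟨rfl, hk⟩
    exact ⟨⟨Nat.lt_succ_of_le hk.le_card, Nat.lt_succ_of_le (μ.rowLen_le_card i)⟩,
      μ.mk_rowLen_notMem i, hk.isLowerSet_insert⟩

theorem sum_addables {M : Type*} [AddCommMonoid M] (g : YoungDiagram → M) :
    ∑ c ∈ addables μ, g (addBox μ c)
      = ∑ k ∈ (range (μ.card + 1)).filter (IsAddableRow μ), g (addToRow μ k) := by
  have himage : addables μ
      = ((range (μ.card + 1)).filter (IsAddableRow μ)).image fun k => (k, μ.rowLen k) := by
    ext ⟨i, j⟩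
    simp only [mem_addables_iff, mem_image, mem_filter, mem_range, Prod.mk.injEq]
    constructor
    · rintro ⟨rfl, hk⟩
      exact ⟨i, ⟨Nat.lt_succ_of_le hk.le_card, hk⟩, rfl, rfl⟩
    · rintro ⟨k, ⟨-, hk⟩, rfl, rfl⟩
      exact ⟨rfl, hk⟩
  rw [himage, sum_image fun _ _ _ _ h => congrArg Prod.fst h]
  rfl

end AddToRow

section HookRatio

variable {μ : YoungDiagram} {k : ℕ}

theorem hook_addToRow (hk : IsAddableRow μ k) {x : ℕ × ℕ} (hx : x ∈ μ) :
    hook (addToRow μ k) x = if x.1 = k ∨ x.2 = μ.rowLen k then hook μ x + 1 else hook μ x := by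
  obtain ⟨i, j⟩ := x
  have hx' := hook_add_one ((mem_addToRow hk).2 (.inr hx))
  have := hook_add_one hx
  have := YoungDiagram.mem_iff_lt_rowLen.1 hx
  have := YoungDiagram.mem_iff_lt_colLen.1 hx
  have := hk.colLen_rowLen
  rw [rowLen_addToRow hk, colLen_addToRow hk] at hx'
  split_ifs at hx' ⊢ <;> subst_vars <;> omega

theorem hook_addToRow_corner (hk : IsAddableRow μ k) : hook (addToRow μ k) (k, μ.rowLen k) = 1 := by
  have h := hook_add_one ((mem_addToRow hk).2 (.inl rfl))
  rw [rowLen_addToRow hk, colLen_addToRow hk, if_pos rfl, if_pos rfl, hk.colLen_rowLen] at h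
  omega

theorem prod_filter_row_or_col {M : Type*} [CommMonoid M] (hk : IsAddableRow μ k)
    (f : ℕ × ℕ → M) :
    ∏ x ∈ μ.cells.filter (fun x => x.1 = k ∨ x.2 = μ.rowLen k), f x
      = (∏ j ∈ range (μ.rowLen k), f (k, j)) * ∏ i ∈ range k, f (i, μ.rowLen k) := by
  have hcells : μ.cells.filter (fun x => x.1 = k ∨ x.2 = μ.rowLen k)
      = {k} ×ˢ range (μ.rowLen k) ∪ range k ×ˢ {μ.rowLen k} := by
    ext ⟨i, j⟩
    simp only [mem_filter, YoungDiagram.mem_cells, mem_union, mem_product, mem_singleton,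
      mem_range]
    have := hk.colLen_rowLen
    constructor
    · rintro ⟨hij, rfl | rfl⟩
      · exact .inl ⟨rfl, YoungDiagram.mem_iff_lt_rowLen.1 hij⟩
      · exact .inr ⟨this ▸ YoungDiagram.mem_iff_lt_colLen.1 hij, rfl⟩
    · rintro (⟨rfl, hj⟩ | ⟨hi, rfl⟩)
      · exact ⟨YoungDiagram.mem_iff_lt_rowLen.2 hj, .inl rfl⟩
      · exact ⟨YoungDiagram.mem_iff_lt_colLen.2 (by rw [this]; exact hi), .inr rfl⟩
  have hdisj : Disjoint ({k} ×ˢ range (μ.rowLen k)) (range k ×ˢ {μ.rowLen k}) := by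
    simp only [disjoint_left, mem_product, mem_singleton, mem_range]
    omega
  rw [hcells, prod_union hdisj, prod_product, prod_product_right, prod_singleton,
    prod_singleton]

/-- Only the hooks in the row and the column of the new box grow, each by one. -/
theorem H_addToRow (hk : IsAddableRow μ k) :
    H (addToRow μ k) = H μ * ((∏ j ∈ range (μ.rowLen k), ((hook μ (k, j) + 1 : ℚ) / hook μ (k, j)))
      * ∏ i ∈ range k, ((hook μ (i, μ.rowLen k) + 1 : ℚ) / hook μ (i, μ.rowLen k))) := by
  have hgrow : ∀ x ∈ μ.cells, (hook (addToRow μ k) x : ℚ) = hook μ x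
      * if x.1 = k ∨ x.2 = μ.rowLen k then ((hook μ x + 1 : ℚ) / hook μ x) else 1 := by
    intro x hx
    have := hook_pos ((μ.mem_cells x).1 hx)
    rw [hook_addToRow hk ((μ.mem_cells x).1 hx)]
    split_ifs
    · field_simp
      push_cast
      ring
    · rw [mul_one]
  rw [← prod_filter_row_or_col hk (fun x => ((hook μ x + 1 : ℚ) / hook μ x)), prod_filter,
    H, H, cells_addToRow hk,
    prod_insert (by rw [YoungDiagram.mem_cells]; exact μ.mk_rowLen_notMem k),
    hook_addToRow_corner hk, Nat.cast_one, one_mul, prod_congr rfl hgrow, prod_mul_distrib]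

end HookRatio

def beta (μ : YoungDiagram) (i : ℕ) : ℕ := μ.rowLen i + (μ.card - i)

section Beta

variable {μ : YoungDiagram} {k : ℕ}

theorem beta_lt_beta (μ : YoungDiagram) {i j : ℕ} (hij : i < j) (hj : j ≤ μ.card) :
    beta μ j < beta μ i := by
  have := μ.rowLen_anti i j hij.le
  unfold beta
  omega

theorem beta_card (μ : YoungDiagram) : beta μ μ.card = 0 := by
  rw [beta, μ.rowLen_card_eq_zero, Nat.sub_self]

theorem hook_add_one_add_beta (hk : IsAddableRow μ k) {i : ℕ} (hi : i < k) :
    hook μ (i, μ.rowLen k) + 1 + beta μ k = beta μ i := by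
  have hlt := hk.rowLen_lt hi
  have h := hook_add_one (YoungDiagram.mem_iff_lt_rowLen.2 hlt)
  have := hk.le_card
  rw [hk.colLen_rowLen] at h
  unfold beta
  omega

/-- The hook lengths of row `k` and the gaps `β_k - β_i`, `i > k`, together fill `[1, β_k]`. -/
theorem prod_hook_row_mul_prod_beta_sub {M : Type*} [CommMonoid M] (hk : k ≤ μ.card)
    (f : ℕ → M) :
    (∏ j ∈ range (μ.rowLen k), f (hook μ (k, j)))
      * ∏ i ∈ Ico (k + 1) (μ.card + 1), f (beta μ k - beta μ i)
      = ∏ x ∈ Icc 1 (beta μ k), f x := by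
  have hrow : ∀ j < μ.rowLen k, hook μ (k, j) + 1 = μ.rowLen k - j + (μ.colLen j - k)
      ∧ k < μ.colLen j ∧ μ.colLen j ≤ μ.card := fun j hj =>
    have hmem := YoungDiagram.mem_iff_lt_rowLen.2 hj
    ⟨hook_add_one hmem, YoungDiagram.mem_iff_lt_colLen.1 hmem, μ.colLen_le_card j⟩
  have hinj_row : Set.InjOn (fun j => hook μ (k, j)) (range (μ.rowLen k)) := by
    intro p hp q hq hpq
    simp only [coe_range, Set.mem_Iio] at hp hq hpq
    have := hrow p hp
    have := hrow q hq
    have := μ.colLen_anti p q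
    have := μ.colLen_anti q p
    omega
  have hinj_beta : Set.InjOn (fun i => beta μ k - beta μ i) (Ico (k + 1) (μ.card + 1)) := by
    intro p hp q hq hpq
    simp only [coe_Ico, Set.mem_Ico] at hp hq hpq
    have := beta_lt_beta μ (show k < p by omega) (by omega)
    have := beta_lt_beta μ (show k < q by omega) (by omega)
    rcases lt_trichotomy p q with h | h | h
    · exact absurd hpq (by have := beta_lt_beta μ h (by omega); omega)
    · exact h
    · exact absurd hpq (by have := beta_lt_beta μ h (by omega); omega)
  have hdisj : Disjoint ((range (μ.rowLen k)).image fun j => hook μ (k, j))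
      ((Ico (k + 1) (μ.card + 1)).image fun i => beta μ k - beta μ i) := by
    simp only [disjoint_left, mem_image, mem_range, mem_Ico]
    rintro _ ⟨j, hj, rfl⟩ ⟨i, ⟨hki, hin⟩, hij⟩
    have := hrow j hj
    have : j < μ.rowLen i ↔ i < μ.colLen j := by
      rw [← YoungDiagram.mem_iff_lt_rowLen, ← YoungDiagram.mem_iff_lt_colLen]
    have := μ.rowLen_anti k i (by omega)
    unfold beta at hij
    omega
  have hunion : ((range (μ.rowLen k)).image fun j => hook μ (k, j))
      ∪ ((Ico (k + 1) (μ.card + 1)).image fun i => beta μ k - beta μ i) = Icc 1 (beta μ k) := by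
    refine eq_of_subset_of_card_le (union_subset ?_ ?_) ?_
    · simp only [subset_iff, mem_image, mem_range, mem_Icc]
      rintro _ ⟨j, hj, rfl⟩
      have := hrow j hj
      unfold beta
      omega
    · simp only [subset_iff, mem_image, mem_Ico, mem_Icc]
      rintro _ ⟨i, ⟨hki, hin⟩, rfl⟩
      have := beta_lt_beta μ hki (by omega)
      omega
    · rw [card_union_of_disjoint hdisj, card_image_of_injOn hinj_row,
        card_image_of_injOn hinj_beta, card_range, Nat.card_Ico, Nat.card_Icc, beta]
      omega
  rw [← hunion, prod_union hdisj, prod_image hinj_row, prod_image hinj_beta]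

theorem prod_Icc_add_one_div (N : ℕ) : ∏ x ∈ Icc 1 N, ((x + 1 : ℚ) / x) = N + 1 := by
  induction N with
  | zero => simp
  | succ N ih =>
    rw [prod_Icc_succ_top (by omega), ih]
    push_cast
    field_simp

theorem H_mul_beta_add_one (hk : IsAddableRow μ k) :
    H μ * (beta μ k + 1) = H (addToRow μ k)
      * ∏ j ∈ (range (μ.card + 1)).erase k,
          ((beta μ j - beta μ k - 1 : ℚ) / (beta μ j - beta μ k)) := by
  have hkn := hk.le_card
  have hsplit : (range (μ.card + 1)).erase k = range k ∪ Ico (k + 1) (μ.card + 1) := by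
    ext
    simp only [mem_erase, mem_range, mem_union, mem_Ico]
    omega
  have hdisj : Disjoint (range k) (Ico (k + 1) (μ.card + 1)) := by
    simp only [disjoint_left, mem_range, mem_Ico]
    omega
  have hcol : ∀ i ∈ range k, ((beta μ i - beta μ k - 1 : ℚ) / (beta μ i - beta μ k))
      = ((hook μ (i, μ.rowLen k) + 1 : ℚ) / hook μ (i, μ.rowLen k))⁻¹ := by
    intro i hi
    have h : (hook μ (i, μ.rowLen k) + 1 + beta μ k : ℚ) = beta μ i := by
      exact_mod_cast hook_add_one_add_beta hk (mem_range.1 hi)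
    rw [inv_div, ← h]
    congr 1 <;> ring
  have hgap : ∀ i ∈ Ico (k + 1) (μ.card + 1),
      ((beta μ i - beta μ k - 1 : ℚ) / (beta μ i - beta μ k))
      = (((beta μ k - beta μ i : ℕ) : ℚ) + 1) / (beta μ k - beta μ i : ℕ) := by
    intro i hi
    rw [mem_Ico] at hi
    rw [Nat.cast_sub (beta_lt_beta μ (by omega : k < i) (by omega)).le, ← neg_div_neg_eq]
    congr 1 <;> ring
  have hcol_ne : ∏ i ∈ range k, ((hook μ (i, μ.rowLen k) + 1 : ℚ) / hook μ (i, μ.rowLen k)) ≠ 0 :=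
    prod_ne_zero_iff.2 fun i hi => by
      have := hook_pos (YoungDiagram.mem_iff_lt_rowLen.2 (hk.rowLen_lt (mem_range.1 hi)))
      positivity
  have htile := prod_hook_row_mul_prod_beta_sub hkn fun x => ((x + 1 : ℚ) / x)
  rw [prod_Icc_add_one_div] at htile
  rw [H_addToRow hk, hsplit, prod_union hdisj, prod_congr rfl hcol, prod_congr rfl hgap,
    prod_inv_distrib, ← htile]
  field_simp

end Beta

section LagrangeWeights

variable {F ι : Type*} [Field F] [DecidableEq ι] {s : Finset ι} {v : ι → F} {P : F[X]}

theorem _root_.Lagrange.eval_eq_sum_mul_nodalWeight_mul_prod_erase (hvs : Set.InjOn v s)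
    (hP : P.degree < #s) (z : F) :
    P.eval z = ∑ i ∈ s, P.eval (v i) * Lagrange.nodalWeight s v i * ∏ j ∈ s.erase i, (z - v j) := by
  conv_lhs => rw [Lagrange.eq_interpolate hvs hP, Lagrange.interpolate_eq_sum]
  simp [eval_finsetSum, eval_prod, Lagrange.nodalWeight, div_eq_mul_inv, prod_inv_distrib]

theorem _root_.Lagrange.coeff_eq_sum_mul_nodalWeight (hvs : Set.InjOn v s) (hP : P.degree < #s) :
    P.coeff (#s - 1) = ∑ i ∈ s, P.eval (v i) * Lagrange.nodalWeight s v i := by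
  simp [Lagrange.coeff_eq_sum hvs hP, Lagrange.nodalWeight, div_eq_mul_inv, prod_inv_distrib]

theorem _root_.Lagrange.sum_mul_nodalWeight_mul_sub_add_mul_prod_erase (hvs : Set.InjOn v s)
    (hP : P.degree < #s) (c z : F) :
    ∑ i ∈ s, P.eval (v i) * Lagrange.nodalWeight s v i
        * ((z - v i + c) * ∏ j ∈ s.erase i, (z - v j))
      = P.coeff (#s - 1) * ∏ j ∈ s, (z - v j) + c * P.eval z := by
  have hsplit : ∀ i ∈ s, (z - v i + c) * ∏ j ∈ s.erase i, (z - v j)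
      = ∏ j ∈ s, (z - v j) + c * ∏ j ∈ s.erase i, (z - v j) := fun i hi => by
    rw [add_mul, mul_prod_erase s (fun j => z - v j) hi]
  rw [Lagrange.coeff_eq_sum_mul_nodalWeight hvs hP,
    Lagrange.eval_eq_sum_mul_nodalWeight_mul_prod_erase hvs hP z, sum_mul, mul_sum,
    ← sum_add_distrib]
  refine sum_congr rfl fun i hi => ?_
  rw [hsplit i hi]
  ring

end LagrangeWeights

noncomputable def phiPoly (μ : YoungDiagram) : ℚ[X] :=
  ∏ i ∈ range μ.card, (X + C ((beta μ i : ℚ) - 1))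

noncomputable def weight (μ : YoungDiagram) (k : ℕ) : ℚ :=
  (phiPoly μ).eval (-(beta μ k : ℚ))
    * Lagrange.nodalWeight (range (μ.card + 1)) (fun i => -(beta μ i : ℚ)) k

section Weight

variable {μ : YoungDiagram} {k : ℕ}

theorem eval_phiPoly (μ : YoungDiagram) (z : ℚ) : (phiPoly μ).eval z = phiEval μ z := by
  simp only [phiPoly, phiEval, eval_prod, eval_add, eval_X, eval_C]
  refine prod_congr rfl fun i hi => ?_
  rw [beta, Nat.cast_add, Nat.cast_sub (mem_range.1 hi).le]
  ring

theorem phiPoly_monic (μ : YoungDiagram) : (phiPoly μ).Monic :=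
  monic_prod_of_monic _ _ fun _ _ => monic_X_add_C _

theorem natDegree_phiPoly (μ : YoungDiagram) : (phiPoly μ).natDegree = μ.card := by
  rw [phiPoly, natDegree_prod_of_monic _ _ fun _ _ => monic_X_add_C _]
  simp only [natDegree_X_add_C, sum_const, card_range, smul_eq_mul, mul_one]

theorem weight_mul_beta_add_one (hk : k ≤ μ.card) :
    weight μ k * (beta μ k + 1)
      = ∏ j ∈ (range (μ.card + 1)).erase k,
          ((beta μ j - beta μ k - 1 : ℚ) / (beta μ j - beta μ k)) := by
  have hlast : ∏ j ∈ range (μ.card + 1), (beta μ j - beta μ k - 1 : ℚ)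
      = -(beta μ k + 1) * (phiPoly μ).eval (-(beta μ k : ℚ)) := by
    rw [prod_range_succ, beta_card, phiPoly, eval_prod]
    simp only [eval_add, eval_X, eval_C]
    rw [mul_comm]
    congr 1
    · push_cast; ring
    · exact prod_congr rfl fun _ _ => by ring
  have hself : ∏ j ∈ range (μ.card + 1), (beta μ j - beta μ k - 1 : ℚ)
      = -∏ j ∈ (range (μ.card + 1)).erase k, (beta μ j - beta μ k - 1 : ℚ) := by
    rw [← mul_prod_erase _ _ (mem_range.2 (Nat.lt_succ_of_le hk))]
    ring
  have hnodal : Lagrange.nodalWeight (range (μ.card + 1)) (fun i => -(beta μ i : ℚ)) k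
      = ∏ j ∈ (range (μ.card + 1)).erase k, (beta μ j - beta μ k : ℚ)⁻¹ :=
    prod_congr rfl fun _ _ => by ring
  have hkey : (beta μ k + 1) * (phiPoly μ).eval (-(beta μ k : ℚ))
      = ∏ j ∈ (range (μ.card + 1)).erase k, (beta μ j - beta μ k - 1 : ℚ) :=
    neg_inj.1 (by rw [← hself, hlast]; ring)
  rw [prod_div_distrib, div_eq_mul_inv, ← prod_inv_distrib, ← hnodal, weight, ← hkey]
  ring

theorem weight_eq_zero (hk : ¬IsAddableRow μ k) (hkn : k ≤ μ.card) : weight μ k = 0 := by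
  rw [IsAddableRow, not_or, not_lt] at hk
  have hrow := le_antisymm hk.2 (μ.rowLen_anti _ _ (Nat.sub_le k 1))
  have hbeta : (beta μ (k - 1) : ℚ) = beta μ k + 1 := by
    unfold beta
    norm_cast
    omega
  rw [weight, phiPoly, eval_prod, prod_eq_zero (mem_range.2 (by omega : k - 1 < μ.card)),
    zero_mul]
  simp only [eval_add, eval_X, eval_C, hbeta]
  ring

theorem H_addToRow_mul_weight (hk : IsAddableRow μ k) : H (addToRow μ k) * weight μ k = H μ := by
  refine mul_right_cancel₀ (by positivity : (beta μ k + 1 : ℚ) ≠ 0) ?_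
  rw [mul_assoc, weight_mul_beta_add_one hk.le_card, H_mul_beta_add_one hk]

theorem beta_addToRow (hk : IsAddableRow μ k) {i : ℕ} (hi : i ≤ μ.card) :
    beta (addToRow μ k) i = beta μ i + 1 + if i = k then 1 else 0 := by
  unfold beta
  rw [card_addToRow hk, rowLen_addToRow hk]
  split_ifs <;> subst_vars <;> omega

theorem phiEval_addToRow (hk : IsAddableRow μ k) (z : ℚ) :
    phiEval (addToRow μ k) z
      = (z + beta μ k + 1) * ∏ j ∈ (range (μ.card + 1)).erase k, (z + beta μ j) := by
  rw [← eval_phiPoly, phiPoly, eval_prod, card_addToRow hk,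
    ← mul_prod_erase _ _ (mem_range.2 (Nat.lt_succ_of_le hk.le_card))]
  simp only [eval_add, eval_X, eval_C]
  rw [beta_addToRow hk hk.le_card, if_pos rfl]
  congr 1
  · push_cast; ring
  · refine prod_congr rfl fun j hj => ?_
    obtain ⟨hjk, hj⟩ := mem_erase.1 hj
    rw [beta_addToRow hk (Nat.lt_succ_iff.1 (mem_range.1 hj)), if_neg hjk]
    push_cast; ring

theorem mul_phiEval_add_one (μ : YoungDiagram) (z : ℚ) :
    z * phiEval μ (z + 1) = ∏ j ∈ range (μ.card + 1), (z + beta μ j) := by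
  rw [prod_range_succ, beta_card, ← eval_phiPoly, phiPoly, eval_prod]
  simp only [eval_add, eval_X, eval_C]
  push_cast
  rw [mul_comm, add_zero]
  exact congrArg (· * z) (prod_congr rfl fun _ _ => by ring)

theorem sum_weight_mul (μ : YoungDiagram) (z : ℚ) :
    ∑ k ∈ range (μ.card + 1),
        weight μ k * ((z + beta μ k + 1) * ∏ j ∈ (range (μ.card + 1)).erase k, (z + beta μ j))
      = phiEval μ z + z * phiEval μ (z + 1) := by
  have hinj : Set.InjOn (fun i => -(beta μ i : ℚ)) (range (μ.card + 1)) := by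
    intro i hi j hj hij
    simp only [coe_range, Set.mem_Iio, neg_inj, Nat.cast_inj] at hi hj hij
    rcases lt_trichotomy i j with h | h | h
    · exact absurd hij (beta_lt_beta μ h (by omega)).ne'
    · exact h
    · exact absurd hij (beta_lt_beta μ h (by omega)).ne
  have hdeg : (phiPoly μ).degree < #(range (μ.card + 1)) := by
    rw [degree_eq_natDegree (phiPoly_monic μ).ne_zero, natDegree_phiPoly, card_range]
    exact_mod_cast Nat.lt_succ_self _
  have hcoeff : (phiPoly μ).coeff (#(range (μ.card + 1)) - 1) = 1 := by
    rw [card_range, Nat.add_sub_cancel, ← natDegree_phiPoly μ]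
    exact phiPoly_monic μ
  have := Lagrange.sum_mul_nodalWeight_mul_sub_add_mul_prod_erase hinj hdeg 1 z
  simp only [sub_neg_eq_add, hcoeff, one_mul] at this
  rw [eval_phiPoly μ z] at this
  rw [mul_phiEval_add_one, add_comm (phiEval μ z)]
  simpa only [weight, mul_assoc] using this

end Weight

theorem sum_addables_phiEval_div_H (μ : YoungDiagram) (z : ℚ) :
    ∑ c ∈ addables μ, phiEval (addBox μ c) z / H (addBox μ c)
      = (phiEval μ z + z * phiEval μ (z + 1)) / H μ := by
  rw [sum_addables (fun t => phiEval t z / H t), ← sum_weight_mul, sum_div]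
  refine sum_subset_zero_on_sdiff (filter_subset _ _) (fun k hk => ?_) (fun k hk => ?_)
  · obtain ⟨hkn, hk⟩ := mem_sdiff.1 hk
    rw [weight_eq_zero (fun h => hk (mem_filter.2 ⟨hkn, h⟩)) (Nat.lt_succ_iff.1 (mem_range.1 hkn)),
      zero_mul, zero_div]
  · have hk := (mem_filter.1 hk).2
    rw [phiEval_addToRow hk, div_eq_div_iff (H_ne_zero _) (H_ne_zero _),
      ← H_addToRow_mul_weight hk]
    ring

/-- `D(φ_λ(z)/H_λ) = z·φ_λ(z+1)/H_λ`, i.e.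
`Σ_{λ⁺} φ_{λ⁺}(z)/H_{λ⁺} − φ_λ(z)/H_λ = z·φ_λ(z+1)/H_λ`, as an identity of
polynomials in `z` (equivalently, for every `z : ℚ`). -/
theorem D_phi (l : YoungDiagram) (z : ℚ) :
    D (fun t => phiEval t z / H t) l = z * phiEval l (z + 1) / H l := by
  rw [D, sum_addables_phiEval_div_H]
  ring

end HookDiff
end
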